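/- arXiv:2306.12611 — 7 statements merged into one kernel-verified Lean document; each statement's English description precedes it below -/
import Mathlib

section
/- Fix an integer k ≥ 1. If (x,y) and (x',y') are distinct integer points satisfying x ≡ ky (mod k²+1) and x' ≡ ky' (mod k²+1), then |x - x'| + |y - y'| ≥ k + 1. -/
/-- Fix an integer `k ≥ 1`. If `(x,y)` and `(x',y')` are distinct integer points
satisfying `x ≡ ky (mod k²+1)` and `x' ≡ ky' (mod k²+1)`, then
`|x - x'| + |y - y'| ≥ k + 1`. -/
theorem tilted_grid_min_distance (k x y x' y' : ℤ) (hk : 1 ≤ k)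
    (h1 : x ≡ k * y [ZMOD (k ^ 2 + 1)])
    (h2 : x' ≡ k * y' [ZMOD (k ^ 2 + 1)])
    (hne : (x, y) ≠ (x', y')) :
    k + 1 ≤ |x - x'| + |y - y'| := by
  set a := x - x' with ha
  set b := y - y' with hb
  have hdvd : (k ^ 2 + 1) ∣ (a - k * b) := by
    have := (h1.sub h2).dvd
    have : (k ^ 2 + 1) ∣ (k * y - k * y') - (x - x') := this
    have h := dvd_neg.mpr this
    simpa [ha, hb, mul_sub] using h
  by_cases hab : a = k * b
  · have hb0 : b ≠ 0 := by
      rintro rfl0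
      apply hne
      have hy : y = y' := by omega
      have hx : x = x' := by
        have : a = 0 := by simp [hab, rfl0]
        omega
      simp [hx, hy]
    have h1b : 1 ≤ |b| := Int.one_le_abs hb0
    have : |a| = k * |b| := by
      rw [hab, abs_mul, abs_of_nonneg (by omega : (0:ℤ) ≤ k)]
    nlinarith [abs_nonneg a, abs_nonneg b]
  · have hne0 : a - k * b ≠ 0 := fun h => hab (by omega)
    have hge : (k ^ 2 + 1) ≤ |a - k * b| := Int.le_of_dvd (abs_pos.mpr hne0) ((dvd_abs _ _).mpr hdvd)
    have habs : |a - k * b| ≤ |a| + k * |b| := by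
      calc |a - k * b| ≤ |a| + |k * b| := abs_sub _ _
        _ = |a| + k * |b| := by rw [abs_mul, abs_of_nonneg (by omega : (0:ℤ) ≤ k)]
    have : k ^ 2 + 1 ≤ |a| + k * |b| := le_trans hge habs
    nlinarith [abs_nonneg a, abs_nonneg b]
end

section
/- Consider an interchange of order n (lanes L₁,...,Lₙ in order, with a ramp r(i,j) for each pair i<j adjacent to Lᵢ and Lⱼ, possibly adjacent to lanes strictly between them, and non-adjacent to all other lanes). Let F be a collection of flips, and let a,b,c and d,e,f be two disjoint triples of lanes such that a,b,c are pairwise equivalent under F and d,e,f are pairwise equivalent under F (equivalent meaning contained in exactly the same flips). Then after performing all flips in F, the flipped graph contains a two-edge path lane–ramp–lane connecting some lane in {a,b,c} to some lane in {d,e,f}. -/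
/-- An interchange of order `n` in a graph `G`: a linear sequence of `n` lanes, and a
ramp for each pair of lanes; each ramp is adjacent to its two lanes and non-adjacent to
every lane outside the interval between its two lanes (lane–lane and ramp–ramp edges,
and edges from a ramp to lanes strictly between its two lanes, are unconstrained). -/
structure Interchange {V : Type*} (G : SimpleGraph V) (n : ℕ) where
  lane : Fin n → V
  ramp : ∀ i j : Fin n, i < j → V
  lane_inj : Function.Injective lane
  ramp_ne_lane : ∀ i j (h : i < j) (k : Fin n), ramp i j h ≠ lane k
  ramp_inj : ∀ i j (h : i < j) i' j' (h' : i' < j'),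
    ramp i j h = ramp i' j' h' → i = i' ∧ j = j'
  adj_left : ∀ i j (h : i < j), G.Adj (ramp i j h) (lane i)
  adj_right : ∀ i j (h : i < j), G.Adj (ramp i j h) (lane j)
  not_adj : ∀ i j (h : i < j) (k : Fin n), k < i ∨ j < k → ¬ G.Adj (ramp i j h) (lane k)

/-- The graph obtained from `G` by performing a collection `F` of flips: the adjacency
of a pair of distinct vertices is toggled once for each flip containing both. -/
def multiFlip {V : Type*} (G : SimpleGraph V) (F : Finset (Set V)) : SimpleGraph V where
  Adj u v := u ≠ v ∧ Xor' (G.Adj u v) (Odd {A : Set V | A ∈ F ∧ u ∈ A ∧ v ∈ A}.ncard)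
  symm := ⟨by
    intro u v h
    refine ⟨h.1.symm, ?_⟩
    have hset : {A : Set V | A ∈ F ∧ v ∈ A ∧ u ∈ A} = {A : Set V | A ∈ F ∧ u ∈ A ∧ v ∈ A} := by
      ext A; simp only [Set.mem_setOf_eq]; tauto
    rw [G.adj_comm v u, hset]
    exact h.2⟩
  loopless := ⟨fun v h => h.1 rfl⟩

/-- Two vertices are equivalent under a collection `F` of flips if each flip in `F`
contains both or neither of them. -/
def EqvUnder {V : Type*} (F : Finset (Set V)) (u v : V) : Prop :=
  ∀ A ∈ F, (u ∈ A ↔ v ∈ A)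

/-!
Take the two lanes `p < q`, one from each triple, that are consecutive among the six lanes
in the linear order. The ramp `r(p, q)` is adjacent to both, and every other lane of either
triple lies outside `[p, q]`, so is non-adjacent to `r(p, q)`. Two equivalent lanes see the
same flips together with `r(p, q)`, so the flips toggle `r(p, q)`'s adjacency to them the
same number of times: of an endpoint lane and an equivalent outer lane, exactly one stays
(or becomes) adjacent to `r(p, q)`. Doing this in both triples gives the path.
-/

theorem EqvUnder.refl {V : Type*} (F : Finset (Set V)) (u : V) : EqvUnder F u u :=
  fun _ _ => Iff.rfl

theorem EqvUnder.symm {V : Type*} {F : Finset (Set V)} {u v : V} (h : EqvUnder F u v) :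
    EqvUnder F v u :=
  fun A hA => (h A hA).symm

theorem EqvUnder.trans {V : Type*} {F : Finset (Set V)} {u v w : V} (huv : EqvUnder F u v)
    (hvw : EqvUnder F v w) : EqvUnder F u w :=
  fun A hA => (huv A hA).trans (hvw A hA)

theorem multiFlip_adj_or_adj_of_eqvUnder {V : Type*} {G : SimpleGraph V} {F : Finset (Set V)}
    {r u v : V} (hu : G.Adj r u) (hv : ¬ G.Adj r v) (hrv : r ≠ v) (huv : EqvUnder F u v) :
    (multiFlip G F).Adj r u ∨ (multiFlip G F).Adj r v := by
  have hflips : {A : Set V | A ∈ F ∧ r ∈ A ∧ u ∈ A} = {A : Set V | A ∈ F ∧ r ∈ A ∧ v ∈ A} :=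
    Set.ext fun A => and_congr_right fun hA => and_congr_right fun _ => huv A hA
  by_cases hodd : Odd {A : Set V | A ∈ F ∧ r ∈ A ∧ v ∈ A}.ncard
  · exact Or.inr ⟨hrv, Or.inr ⟨hodd, hv⟩⟩
  · exact Or.inl ⟨hu.ne, Or.inl ⟨hu, hflips ▸ hodd⟩⟩

def Finset.Straddles {α : Type*} [LinearOrder α] (S : Finset α) (p q : α) : Prop :=
  (p ∈ S ∨ q ∈ S) ∧ ∃ x ∈ S, x < p ∨ q < x

theorem Finset.exists_lt_straddles_of_forall_lt {α : Type*} [LinearOrder α] {S T : Finset α}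
    (hST : Disjoint S T) (hS : 1 < S.card) (hT : 1 < T.card) {s : α} (hs : s ∈ S)
    (hsT : ∀ t ∈ T, s < t) :
    ∃ p q, p < q ∧ S.Straddles p q ∧ T.Straddles p q := by
  have hTne : T.Nonempty := Finset.card_pos.mp (zero_lt_one.trans hT)
  set q := T.min' hTne
  have hqT : q ∈ T := T.min'_mem hTne
  have hbelow : (S.filter (· < q)).Nonempty := ⟨s, Finset.mem_filter.mpr ⟨hs, hsT q hqT⟩⟩
  set p := (S.filter (· < q)).max' hbelow
  obtain ⟨hpS, hpq⟩ := Finset.mem_filter.mp ((S.filter (· < q)).max'_mem hbelow)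
  have hS_out : ∃ x ∈ S, x < p ∨ q < x := by
    obtain ⟨x, hx, hxp⟩ := S.exists_mem_ne hS p
    have hxq : x ≠ q := fun h => Finset.disjoint_left.mp hST hx (h ▸ hqT)
    refine ⟨x, hx, ?_⟩
    rcases lt_or_gt_of_ne hxq with hlt | hgt
    · exact Or.inl (lt_of_le_of_ne (Finset.le_max' _ x (Finset.mem_filter.mpr ⟨hx, hlt⟩)) hxp)
    · exact Or.inr hgt
  have hT_out : ∃ y ∈ T, y < p ∨ q < y := by
    obtain ⟨y, hy, hyq⟩ := T.exists_mem_ne hT q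
    exact ⟨y, hy, Or.inr (lt_of_le_of_ne (T.min'_le y hy) hyq.symm)⟩
  exact ⟨p, q, hpq, ⟨Or.inl hpS, hS_out⟩, ⟨Or.inr hqT, hT_out⟩⟩

theorem Finset.exists_lt_straddles_of_disjoint {α : Type*} [LinearOrder α] {S T : Finset α}
    (hST : Disjoint S T) (hS : 1 < S.card) (hT : 1 < T.card) :
    ∃ p q, p < q ∧ S.Straddles p q ∧ T.Straddles p q := by
  have hSne : S.Nonempty := Finset.card_pos.mp (zero_lt_one.trans hS)
  have hTne : T.Nonempty := Finset.card_pos.mp (zero_lt_one.trans hT)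
  have hmin : S.min' hSne ≠ T.min' hTne := fun h =>
    Finset.disjoint_left.mp hST (S.min'_mem hSne) (h ▸ T.min'_mem hTne)
  rcases lt_or_gt_of_ne hmin with hlt | hgt
  · exact exists_lt_straddles_of_forall_lt hST hS hT (S.min'_mem hSne)
      fun t ht => hlt.trans_le (T.min'_le t ht)
  · obtain ⟨p, q, hpq, hT_straddle, hS_straddle⟩ :=
      exists_lt_straddles_of_forall_lt hST.symm hT hS (T.min'_mem hTne)
        fun s hs => hgt.trans_le (S.min'_le s hs)
    exact ⟨p, q, hpq, hS_straddle, hT_straddle⟩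

theorem Interchange.exists_mem_multiFlip_adj_ramp {V : Type*} {G : SimpleGraph V} {n : ℕ}
    (I : Interchange G n) (F : Finset (Set V)) {p q : Fin n} (hpq : p < q)
    {U : Finset (Fin n)} {v : V} (hU : ∀ x ∈ U, EqvUnder F v (I.lane x))
    (hpqU : U.Straddles p q) :
    ∃ x ∈ U, (multiFlip G F).Adj (I.ramp p q hpq) (I.lane x) := by
  obtain ⟨hend, y, hy, hy_out⟩ := hpqU
  obtain ⟨k, hk, hk_adj⟩ : ∃ k ∈ U, G.Adj (I.ramp p q hpq) (I.lane k) := by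
    rcases hend with hp | hq
    · exact ⟨p, hp, I.adj_left p q hpq⟩
    · exact ⟨q, hq, I.adj_right p q hpq⟩
  rcases multiFlip_adj_or_adj_of_eqvUnder hk_adj (I.not_adj p q hpq y hy_out)
      (I.ramp_ne_lane p q hpq y) ((hU k hk).symm.trans (hU y hy)) with h | h
  · exact ⟨k, hk, h⟩
  · exact ⟨y, hy, h⟩

/-- Given two disjoint triples `a,b,c` and `d,e,f` of lanes of an interchange, each
triple pairwise equivalent under a collection `F` of flips, the flipped graph contains
a two-edge lane–ramp–lane path from a lane of `{a,b,c}` to a lane of `{d,e,f}`. -/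
theorem interchange_triple_to_triple {V : Type*} (G : SimpleGraph V) (n : ℕ)
    (I : Interchange G n) (F : Finset (Set V)) (a b c d e f : Fin n)
    (hcard1 : ({a, b, c} : Finset (Fin n)).card = 3)
    (hcard2 : ({d, e, f} : Finset (Fin n)).card = 3)
    (hdisj : Disjoint ({a, b, c} : Finset (Fin n)) ({d, e, f} : Finset (Fin n)))
    (hab : EqvUnder F (I.lane a) (I.lane b)) (hac : EqvUnder F (I.lane a) (I.lane c))
    (hde : EqvUnder F (I.lane d) (I.lane e)) (hdf : EqvUnder F (I.lane d) (I.lane f)) :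
    ∃ x ∈ ({a, b, c} : Finset (Fin n)), ∃ y ∈ ({d, e, f} : Finset (Fin n)),
      ∃ (p q : Fin n) (hpq : p < q),
        (multiFlip G F).Adj (I.lane x) (I.ramp p q hpq) ∧
        (multiFlip G F).Adj (I.ramp p q hpq) (I.lane y) := by
  have habc : ∀ x ∈ ({a, b, c} : Finset (Fin n)), EqvUnder F (I.lane a) (I.lane x) := by
    simp only [Finset.forall_mem_insert, Finset.mem_singleton, forall_eq]
    exact ⟨EqvUnder.refl F _, hab, hac⟩
  have hdef : ∀ y ∈ ({d, e, f} : Finset (Fin n)), EqvUnder F (I.lane d) (I.lane y) := by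
    simp only [Finset.forall_mem_insert, Finset.mem_singleton, forall_eq]
    exact ⟨EqvUnder.refl F _, hde, hdf⟩
  obtain ⟨p, q, hpq, hpqS, hpqT⟩ :=
    Finset.exists_lt_straddles_of_disjoint hdisj (by omega) (by omega)
  obtain ⟨x, hx, hxr⟩ := I.exists_mem_multiFlip_adj_ramp F hpq habc hpqS
  obtain ⟨y, hy, hyr⟩ := I.exists_mem_multiFlip_adj_ramp F hpq hdef hpqT
  exact ⟨x, hx, y, hy, p, q, hpq, hxr.symm, hyr⟩
end

section
/- If a class of graphs contains arbitrarily large interchanges as induced subgraphs, then it contains either arbitrarily large dense interchanges (interchanges in which every ramp is adjacent to every lane between its two lanes) or arbitrarily large sparse interchanges (interchanges in which every ramp is adjacent only to its two lanes). -/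
/-- A dense interchange: every ramp is adjacent to every lane strictly between its two
lanes. -/
def Interchange.IsDense {V : Type*} {G : SimpleGraph V} {n : ℕ} (I : Interchange G n) : Prop :=
  ∀ i j (h : i < j) (k : Fin n), i < k → k < j → G.Adj (I.ramp i j h) (I.lane k)

/-- A sparse interchange: every ramp is adjacent only to its two lanes among the lanes. -/
def Interchange.IsSparse {V : Type*} {G : SimpleGraph V} {n : ℕ} (I : Interchange G n) : Prop :=
  ∀ i j (h : i < j) (k : Fin n), i < k → k < j → ¬ G.Adj (I.ramp i j h) (I.lane k)

section RamseyAux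

/-- Monochromatic in color `b` for a pair coloring. -/
def PairMono (c : ℕ → ℕ → Bool) (b : Bool) (T : Finset ℕ) : Prop :=
  ∀ i ∈ T, ∀ j ∈ T, i < j → c i j = b

/-- Monochromatic in color `b` for a triple coloring. -/
def TripMono (d : ℕ → ℕ → ℕ → Bool) (b : Bool) (T : Finset ℕ) : Prop :=
  ∀ i ∈ T, ∀ j ∈ T, ∀ k ∈ T, i < j → j < k → d i j k = b

lemma ramsey2 (p q : ℕ) : ∃ N : ℕ, ∀ (c : ℕ → ℕ → Bool) (S : Finset ℕ), N ≤ S.card →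
    ∃ T ⊆ S, (p ≤ T.card ∧ PairMono c true T) ∨ (q ≤ T.card ∧ PairMono c false T) := by
  suffices H : ∀ n p q : ℕ, p + q ≤ n → ∃ N : ℕ, ∀ (c : ℕ → ℕ → Bool) (S : Finset ℕ),
      N ≤ S.card →
      ∃ T ⊆ S, (p ≤ T.card ∧ PairMono c true T) ∨ (q ≤ T.card ∧ PairMono c false T) by
    exact H (p + q) p q le_rfl
  intro n
  induction n with
  | zero =>
    intro p q hpq
    refine ⟨0, fun c S _ => ⟨∅, Finset.empty_subset _, Or.inl ⟨by omega, ?_⟩⟩⟩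
    intro i hi; simp at hi
  | succ n ih =>
    intro p q hpq
    rcases Nat.eq_zero_or_pos p with hp | hp
    · refine ⟨0, fun c S _ => ⟨∅, Finset.empty_subset _, Or.inl ⟨by omega, ?_⟩⟩⟩
      intro i hi; simp at hi
    rcases Nat.eq_zero_or_pos q with hq | hq
    · refine ⟨0, fun c S _ => ⟨∅, Finset.empty_subset _, Or.inr ⟨by omega, ?_⟩⟩⟩
      intro i hi; simp at hi
    obtain ⟨N1, h1⟩ := ih (p - 1) q (by omega)
    obtain ⟨N2, h2⟩ := ih p (q - 1) (by omega)
    refine ⟨N1 + N2 + 1, ?_⟩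
    intro c S hS
    have hne : S.Nonempty := Finset.card_pos.mp (by omega)
    set x := S.min' hne with hx
    have hxS : x ∈ S := S.min'_mem hne
    set A := (S.erase x).filter (fun y => c x y = true) with hA
    set B := (S.erase x).filter (fun y => ¬ c x y = true) with hB
    have hcard : A.card + B.card = S.card - 1 := by
      rw [hA, hB, Finset.card_filter_add_card_filter_not,
        Finset.card_erase_of_mem hxS]
    have hAS : A ⊆ S := (Finset.filter_subset _ _).trans (Finset.erase_subset _ _)
    have hBS : B ⊆ S := (Finset.filter_subset _ _).trans (Finset.erase_subset _ _)
    have hsplit : N1 ≤ A.card ∨ N2 ≤ B.card := by omega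
    rcases hsplit with hA' | hB'
    · obtain ⟨T, hTA, hT⟩ := h1 c A hA'
      rcases hT with ⟨hTc, hTm⟩ | ⟨hTc, hTm⟩
      · -- extend the true-homogeneous set by x
        have hxT : x ∉ T := fun hxT => by
          have := Finset.mem_erase.mp (Finset.mem_filter.mp (hTA hxT)).1
          exact this.1 rfl
        refine ⟨insert x T, ?_, Or.inl ⟨?_, ?_⟩⟩
        · exact Finset.insert_subset hxS (hTA.trans hAS)
        · rw [Finset.card_insert_of_notMem hxT]; omega
        · intro i hi j hj hij
          rcases Finset.mem_insert.mp hi with rfl | hiT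
          · rcases Finset.mem_insert.mp hj with rfl | hjT
            · omega
            · exact (Finset.mem_filter.mp (hTA hjT)).2
          · rcases Finset.mem_insert.mp hj with rfl | hjT
            · have h1 : i ∈ S := hAS (hTA hiT)
              have h2 : i ≠ x :=
                (Finset.mem_erase.mp (Finset.mem_filter.mp (hTA hiT)).1).1
              have := S.min'_le i h1
              omega
            · exact hTm i hiT j hjT hij
      · exact ⟨T, hTA.trans hAS, Or.inr ⟨hTc, hTm⟩⟩
    · obtain ⟨T, hTB, hT⟩ := h2 c B hB'
      rcases hT with ⟨hTc, hTm⟩ | ⟨hTc, hTm⟩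
      · exact ⟨T, hTB.trans hBS, Or.inl ⟨hTc, hTm⟩⟩
      · have hxT : x ∉ T := fun hxT => by
          have := Finset.mem_erase.mp (Finset.mem_filter.mp (hTB hxT)).1
          exact this.1 rfl
        refine ⟨insert x T, ?_, Or.inr ⟨?_, ?_⟩⟩
        · exact Finset.insert_subset hxS (hTB.trans hBS)
        · rw [Finset.card_insert_of_notMem hxT]; omega
        · intro i hi j hj hij
          rcases Finset.mem_insert.mp hi with rfl | hiT
          · rcases Finset.mem_insert.mp hj with rfl | hjT
            · omega
            · have := (Finset.mem_filter.mp (hTB hjT)).2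
              simpa using this
          · rcases Finset.mem_insert.mp hj with rfl | hjT
            · have h1 : i ∈ S := hBS (hTB hiT)
              have h2 : i ≠ x :=
                (Finset.mem_erase.mp (Finset.mem_filter.mp (hTB hiT)).1).1
              have := S.min'_le i h1
              omega
            · exact hTm i hiT j hjT hij

lemma ramsey3 (p q : ℕ) : ∃ N : ℕ, ∀ (d : ℕ → ℕ → ℕ → Bool) (S : Finset ℕ), N ≤ S.card →
    ∃ T ⊆ S, (p ≤ T.card ∧ TripMono d true T) ∨ (q ≤ T.card ∧ TripMono d false T) := by
  suffices H : ∀ n p q : ℕ, p + q ≤ n → ∃ N : ℕ, ∀ (d : ℕ → ℕ → ℕ → Bool) (S : Finset ℕ),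
      N ≤ S.card →
      ∃ T ⊆ S, (p ≤ T.card ∧ TripMono d true T) ∨ (q ≤ T.card ∧ TripMono d false T) by
    exact H (p + q) p q le_rfl
  intro n
  induction n with
  | zero =>
    intro p q hpq
    refine ⟨0, fun d S _ => ⟨∅, Finset.empty_subset _, Or.inl ⟨by omega, ?_⟩⟩⟩
    intro i hi; simp at hi
  | succ n ih =>
    intro p q hpq
    rcases Nat.eq_zero_or_pos p with hp | hp
    · refine ⟨0, fun d S _ => ⟨∅, Finset.empty_subset _, Or.inl ⟨by omega, ?_⟩⟩⟩
      intro i hi; simp at hi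
    rcases Nat.eq_zero_or_pos q with hq | hq
    · refine ⟨0, fun d S _ => ⟨∅, Finset.empty_subset _, Or.inr ⟨by omega, ?_⟩⟩⟩
      intro i hi; simp at hi
    obtain ⟨N1, h1⟩ := ih (p - 1) q (by omega)
    obtain ⟨N2, h2⟩ := ih p (q - 1) (by omega)
    obtain ⟨M, hM⟩ := ramsey2 N1 N2
    refine ⟨M + 1, ?_⟩
    intro d S hS
    have hne : S.Nonempty := Finset.card_pos.mp (by omega)
    set x := S.min' hne with hx
    have hxS : x ∈ S := S.min'_mem hne
    have hcard : M ≤ (S.erase x).card := by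
      rw [Finset.card_erase_of_mem hxS]; omega
    obtain ⟨T, hTS, hT⟩ := hM (fun i j => d x i j) (S.erase x) hcard
    have hTS' : T ⊆ S := hTS.trans (Finset.erase_subset _ _)
    have hxlt : ∀ y ∈ T, x < y := by
      intro y hy
      have h1 : y ∈ S := hTS' hy
      have h2 : y ≠ x := (Finset.mem_erase.mp (hTS hy)).1
      have := S.min'_le y h1
      omega
    rcases hT with ⟨hTc, hTm⟩ | ⟨hTc, hTm⟩
    · obtain ⟨U, hUT, hU⟩ := h1 d T hTc
      rcases hU with ⟨hUc, hUm⟩ | ⟨hUc, hUm⟩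
      · have hxU : x ∉ U := fun hxU => lt_irrefl x (hxlt x (hUT hxU))
        refine ⟨insert x U, Finset.insert_subset hxS (hUT.trans hTS'), Or.inl ⟨?_, ?_⟩⟩
        · rw [Finset.card_insert_of_notMem hxU]; omega
        · intro i hi j hj k hk hij hjk
          rcases Finset.mem_insert.mp hi with rfl | hiU
          · have hjU : j ∈ U := by
              rcases Finset.mem_insert.mp hj with rfl | hjU
              · omega
              · exact hjU
            have hkU : k ∈ U := by
              rcases Finset.mem_insert.mp hk with rfl | hkU
              · exact absurd (hxlt j (hUT hjU)) (by omega)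
              · exact hkU
            exact hTm j (hUT hjU) k (hUT hkU) hjk
          · have hjU : j ∈ U := by
              rcases Finset.mem_insert.mp hj with rfl | hjU
              · exact absurd (hxlt i (hUT hiU)) (by omega)
              · exact hjU
            have hkU : k ∈ U := by
              rcases Finset.mem_insert.mp hk with rfl | hkU
              · exact absurd (hxlt j (hUT hjU)) (by omega)
              · exact hkU
            exact hUm i hiU j hjU k hkU hij hjk
      · exact ⟨U, hUT.trans hTS', Or.inr ⟨hUc, hUm⟩⟩
    · obtain ⟨U, hUT, hU⟩ := h2 d T hTc
      rcases hU with ⟨hUc, hUm⟩ | ⟨hUc, hUm⟩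
      · exact ⟨U, hUT.trans hTS', Or.inl ⟨hUc, hUm⟩⟩
      · have hxU : x ∉ U := fun hxU => lt_irrefl x (hxlt x (hUT hxU))
        refine ⟨insert x U, Finset.insert_subset hxS (hUT.trans hTS'), Or.inr ⟨?_, ?_⟩⟩
        · rw [Finset.card_insert_of_notMem hxU]; omega
        · intro i hi j hj k hk hij hjk
          rcases Finset.mem_insert.mp hi with rfl | hiU
          · have hjU : j ∈ U := by
              rcases Finset.mem_insert.mp hj with rfl | hjU
              · omega
              · exact hjU
            have hkU : k ∈ U := by
              rcases Finset.mem_insert.mp hk with rfl | hkU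
              · exact absurd (hxlt j (hUT hjU)) (by omega)
              · exact hkU
            have := hTm j (hUT hjU) k (hUT hkU) hjk
            simpa using this
          · have hjU : j ∈ U := by
              rcases Finset.mem_insert.mp hj with rfl | hjU
              · exact absurd (hxlt i (hUT hiU)) (by omega)
              · exact hjU
            have hkU : k ∈ U := by
              rcases Finset.mem_insert.mp hk with rfl | hkU
              · exact absurd (hxlt j (hUT hjU)) (by omega)
              · exact hkU
            exact hUm i hiU j hjU k hkU hij hjk

end RamseyAux

section Restrict

variable {V : Type*} {G : SimpleGraph V} {n m : ℕ}

/-- Restrict an interchange along a strictly monotone map of indices. -/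
def Interchange.restrict (I : Interchange G n) (f : Fin m → Fin n) (hf : StrictMono f) :
    Interchange G m where
  lane k := I.lane (f k)
  ramp i j h := I.ramp (f i) (f j) (hf h)
  lane_inj := I.lane_inj.comp hf.injective
  ramp_ne_lane i j h k := I.ramp_ne_lane _ _ _ _
  ramp_inj i j h i' j' h' heq := by
    obtain ⟨e1, e2⟩ := I.ramp_inj _ _ _ _ _ _ heq
    exact ⟨hf.injective e1, hf.injective e2⟩
  adj_left i j h := I.adj_left _ _ _
  adj_right i j h := I.adj_right _ _ _
  not_adj i j h k hk := I.not_adj _ _ _ _ (hk.imp (fun h => hf h) (fun h => hf h))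

lemma Interchange.restrict_isDense (I : Interchange G n) (f : Fin m → Fin n)
    (hf : StrictMono f) (hI : I.IsDense) : (I.restrict f hf).IsDense := by
  intro i j h k hik hkj
  exact hI (f i) (f j) (hf h) (f k) (hf hik) (hf hkj)

lemma Interchange.restrict_isSparse (I : Interchange G n) (f : Fin m → Fin n)
    (hf : StrictMono f) (hI : I.IsSparse) : (I.restrict f hf).IsSparse := by
  intro i j h k hik hkj
  exact hI (f i) (f j) (hf h) (f k) (hf hik) (hf hkj)

/-- The key extraction lemma: any interchange of large enough order contains a dense or
sparse sub-interchange of order `t`. -/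
lemma exists_dense_or_sparse (t : ℕ) : ∃ N : ℕ, ∀ {V : Type} (G : SimpleGraph V)
    (I : Interchange G N), (∃ J : Interchange G t, J.IsDense) ∨
      (∃ J : Interchange G t, J.IsSparse) := by
  obtain ⟨N, hN⟩ := ramsey3 t t
  refine ⟨N, ?_⟩
  intro V G I
  classical
  set d : ℕ → ℕ → ℕ → Bool := fun a b c =>
    if h : a < N ∧ c < N ∧ a < b ∧ b < c then
      decide (G.Adj (I.ramp ⟨a, h.1⟩ ⟨c, h.2.1⟩ (Fin.mk_lt_mk.mpr (h.2.2.1.trans h.2.2.2)))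
        (I.lane ⟨b, lt_trans h.2.2.2 h.2.1⟩))
    else true with hd
  obtain ⟨T, hTS, hT⟩ := hN d (Finset.range N) (by simp)
  have main : ∀ (b : Bool), t ≤ T.card → TripMono d b T →
      ∃ (f : Fin t → Fin N) (hf : StrictMono f),
        ∀ i j (h : i < j) (k : Fin t), i < k → k < j →
          (G.Adj ((I.restrict f hf).ramp i j h) ((I.restrict f hf).lane k) ↔ b = true) := by
    intro b hc hm
    obtain ⟨T', hT'T, hT'c⟩ := Finset.exists_subset_card_eq hc
    have hT'S : T' ⊆ Finset.range N := (hT'T.trans hTS)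
    set e := T'.orderIsoOfFin hT'c with he
    set f : Fin t → Fin N := fun k =>
      ⟨(e k : ℕ), Finset.mem_range.mp (hT'S (e k).2)⟩ with hfdef
    have hf : StrictMono f := by
      intro a b hab
      have : (e a : T') < e b := e.strictMono hab
      exact Fin.mk_lt_mk.mpr this
    refine ⟨f, hf, ?_⟩
    intro i j h k hik hkj
    have hdval : d ((f i : ℕ)) ((f k : ℕ)) ((f j : ℕ)) = b :=
      hm _ (hT'T (e i).2) _ (hT'T (e k).2) _ (hT'T (e j).2) (hf hik) (hf hkj)
    have hcond : (f i : ℕ) < N ∧ (f j : ℕ) < N ∧ (f i : ℕ) < (f k : ℕ) ∧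
        (f k : ℕ) < (f j : ℕ) := ⟨(f i).2, (f j).2, hf hik, hf hkj⟩
    show G.Adj (I.ramp (f i) (f j) (hf h)) (I.lane (f k)) ↔ b = true
    rw [← hdval]
    simp only [hd]
    rw [dif_pos hcond, decide_eq_true_eq]
  rcases hT with ⟨hc, hm⟩ | ⟨hc, hm⟩
  · obtain ⟨f, hf, hiff⟩ := main true hc hm
    exact Or.inl ⟨I.restrict f hf, fun i j hij k hik hkj =>
      (hiff i j hij k hik hkj).mpr rfl⟩
  · obtain ⟨f, hf, hiff⟩ := main false hc hm
    refine Or.inr ⟨I.restrict f hf, fun i j hij k hik hkj hadj => ?_⟩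
    simpa using (hiff i j hij k hik hkj).mp hadj

end Restrict

/-- If a class of graphs contains arbitrarily large interchanges, then it contains
either arbitrarily large dense interchanges or arbitrarily large sparse interchanges. -/
theorem dense_or_sparse_interchanges (C : ∀ V : Type, SimpleGraph V → Prop)
    (h : ∀ n : ℕ, ∃ (V : Type) (G : SimpleGraph V), C V G ∧ Nonempty (Interchange G n)) :
    (∀ m : ℕ, ∃ (V : Type) (G : SimpleGraph V), C V G ∧
      ∃ I : Interchange G m, I.IsDense) ∨
    (∀ m : ℕ, ∃ (V : Type) (G : SimpleGraph V), C V G ∧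
      ∃ I : Interchange G m, I.IsSparse) := by
  by_cases hs : ∀ m : ℕ, ∃ (V : Type) (G : SimpleGraph V), C V G ∧
      ∃ I : Interchange G m, I.IsSparse
  · exact Or.inr hs
  push_neg at hs
  obtain ⟨m0, hm0⟩ := hs
  left
  intro m
  obtain ⟨N, hN⟩ := exists_dense_or_sparse (max m m0)
  obtain ⟨V, G, hC, ⟨I⟩⟩ := h N
  have hcast : ∀ (a : ℕ) (ha : a ≤ max m m0), StrictMono (Fin.castLE ha) :=
    fun a ha x y hxy => by simpa using hxy
  rcases hN G I with ⟨J, hJ⟩ | ⟨J, hJ⟩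
  · exact ⟨V, G, hC, J.restrict _ (hcast m (le_max_left m m0)),
      J.restrict_isDense _ _ hJ⟩
  · exact absurd (⟨J.restrict _ (hcast m0 (le_max_right m m0)),
      J.restrict_isSparse _ _ hJ⟩ : ∃ I : Interchange G m0, I.IsSparse)
      (by have := hm0 V G; tauto)
end

section
/- Place n points p₀,...,p_{n-1} equally spaced on a line segment of length strictly less than 2 in the plane (pᵢ = (di, 0) with d = s/(n-1), s < 2), and for each pair i < j place a point q(i,j) at an intersection of the unit circles centered at pᵢ and pⱼ. Then |q(i,j) - p_k| = 1 for k ∈ {i,j}, |q(i,j) - p_k| < 1 for i < k < j, and |q(i,j) - p_k| > 1 for k < i or k > j. -/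
/-- The lane point `pᵢ = (d·i, 0)`, as a complex number. -/
noncomputable def lanePt (d : ℝ) (i : ℕ) : ℂ := ((d * i : ℝ) : ℂ)

/-- The ramp point `q(i,j)`, the intersection with positive `y`-coordinate of the unit
circles centered at `pᵢ` and `pⱼ`. -/
noncomputable def rampPt (d : ℝ) (i j : ℕ) : ℂ :=
  ((((i : ℝ) + j) * d / 2 : ℝ) : ℂ) +
    (Real.sqrt (1 - (d * ((j : ℝ) - i) / 2) ^ 2) : ℝ) * Complex.I

lemma dist_sq_eq (d : ℝ) (i j k : ℕ)
    (h1 : (d * ((j : ℝ) - i) / 2) ^ 2 ≤ 1) :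
    dist (rampPt d i j) (lanePt d k) ^ 2 = 1 + d ^ 2 * (((i : ℝ) - k) * ((j : ℝ) - k)) := by
  have hs : Real.sqrt (1 - (d * ((j : ℝ) - i) / 2) ^ 2) ^ 2
      = 1 - (d * ((j : ℝ) - i) / 2) ^ 2 :=
    Real.sq_sqrt (by linarith)
  rw [Complex.dist_eq_re_im]
  rw [Real.sq_sqrt (by positivity)]

  simp only [rampPt, lanePt, Complex.add_re, Complex.add_im, Complex.ofReal_re,
    Complex.ofReal_im, Complex.mul_re, Complex.mul_im, Complex.I_re, Complex.I_im]
  linear_combination hs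

/-- For `n` points equally spaced along a segment of length less than 2, and ramp
points at intersections of unit circles: `q(i,j)` is at distance exactly 1 from `pᵢ`
and `pⱼ`, at distance less than 1 from every `p_k` with `i < k < j`, and at distance
greater than 1 from every `p_k` with `k < i` or `k > j`. -/
theorem unit_distance_interchange (n : ℕ) (d : ℝ) (hd : 0 < d)
    (hlen : d * ((n : ℝ) - 1) < 2) (i j k : ℕ) (hij : i < j) (hj : j < n) (hk : k < n) :
    dist (rampPt d i j) (lanePt d i) = 1 ∧
    dist (rampPt d i j) (lanePt d j) = 1 ∧
    (i < k → k < j → dist (rampPt d i j) (lanePt d k) < 1) ∧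
    (k < i ∨ j < k → 1 < dist (rampPt d i j) (lanePt d k)) := by
  have hji : (j : ℝ) - i ≤ (n : ℝ) - 1 := by
    have h1 : (j : ℝ) + 1 ≤ n := by exact_mod_cast hj
    have h2 : (0 : ℝ) ≤ i := Nat.cast_nonneg i
    linarith
  have hij' : (0 : ℝ) < (j : ℝ) - i := by
    have : (i : ℝ) < j := by exact_mod_cast hij
    linarith
  have hbd : 0 ≤ d * ((j : ℝ) - i) / 2 := by positivity
  have hbd2 : d * ((j : ℝ) - i) / 2 < 1 := by nlinarith
  have h1 : (d * ((j : ℝ) - i) / 2) ^ 2 ≤ 1 := by nlinarith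
  have key : ∀ m : ℕ, dist (rampPt d i j) (lanePt d m) ^ 2
      = 1 + d ^ 2 * (((i : ℝ) - m) * ((j : ℝ) - m)) := fun m => dist_sq_eq d i j m h1
  have hnn : ∀ m : ℕ, 0 ≤ dist (rampPt d i j) (lanePt d m) := fun m => dist_nonneg
  have hd2 : (0 : ℝ) < d ^ 2 := pow_pos hd 2
  refine ⟨?_, ?_, ?_, ?_⟩
  · have h := key i
    have : dist (rampPt d i j) (lanePt d i) ^ 2 = 1 := by rw [h]; ring
    nlinarith [hnn i, this]
  · have h := key j
    have : dist (rampPt d i j) (lanePt d j) ^ 2 = 1 := by rw [h]; ring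
    nlinarith [hnn j, this]
  · intro hik hkj
    have hik' : (i : ℝ) - k < 0 := by
      have : (i : ℝ) < k := by exact_mod_cast hik
      linarith
    have hkj' : (0 : ℝ) < (j : ℝ) - k := by
      have : (k : ℝ) < j := by exact_mod_cast hkj
      linarith
    have hneg : d ^ 2 * (((i : ℝ) - k) * ((j : ℝ) - k)) < 0 :=
      mul_neg_of_pos_of_neg hd2 (mul_neg_of_neg_of_pos hik' hkj')
    have hlt : dist (rampPt d i j) (lanePt d k) ^ 2 < 1 ^ 2 := by
      rw [key k]; nlinarith
    exact lt_of_pow_lt_pow_left₀ 2 zero_le_one hlt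
  · intro h
    have hpos : 0 < d ^ 2 * (((i : ℝ) - k) * ((j : ℝ) - k)) := by
      rcases h with h | h
      · have h1 : (0 : ℝ) < (i : ℝ) - k := by
          have : (k : ℝ) < i := by exact_mod_cast h
          linarith
        have h2 : (0 : ℝ) < (j : ℝ) - k := by
          have : (k : ℝ) < j := by exact_mod_cast (h.trans hij)
          linarith
        exact mul_pos hd2 (mul_pos h1 h2)
      · have h1 : (i : ℝ) - k < 0 := by
          have : (i : ℝ) < k := by exact_mod_cast (hij.trans h)
          linarith
        have h2 : (j : ℝ) - k < 0 := by
          have : (j : ℝ) < k := by exact_mod_cast h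
          linarith
        exact mul_pos hd2 (mul_pos_of_neg_of_neg h1 h2)
    have hgt : 1 ^ 2 < dist (rampPt d i j) (lanePt d k) ^ 2 := by
      rw [key k]; nlinarith
    exact lt_of_pow_lt_pow_left₀ 2 (hnn k) hgt
end

section
/- With points pᵢ = (di, 0), 0 ≤ i ≤ n-1, 0 < d(n-1) < 2, and q(i,j) = ((i+j)d/2, sqrt(1 - (d(j-i)/2)²)) for i < j: for any k with i < k < j, the distance |q(i,j) - p_k| is strictly less than 1, and for any k with k < i or k > j, |q(i,j) - p_k| is strictly greater than 1. -/
/-- Core computation for the unit-distance interchange: for `i < k < j` the distance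
`|q(i,j) - p_k|` is strictly less than 1, and for `k < i` or `k > j` it is strictly
greater than 1. -/
theorem unit_distance_core (n : ℕ) (d : ℝ) (hd : 0 < d)
    (hlen : d * ((n : ℝ) - 1) < 2) (i j k : ℕ) (hij : i < j) (hj : j < n) (hk : k < n) :
    (i < k → k < j → dist (rampPt d i j) (lanePt d k) < 1) ∧
    (k < i ∨ j < k → 1 < dist (rampPt d i j) (lanePt d k)) := by
  have hji : (j : ℝ) - i ≤ (n : ℝ) - 1 := by
    have h1 : (j : ℝ) + 1 ≤ n := by exact_mod_cast hj
    have h2 : (0 : ℝ) ≤ i := Nat.cast_nonneg i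
    linarith
  have hji0 : (0 : ℝ) ≤ (j : ℝ) - i := by
    have : (i : ℝ) ≤ j := by exact_mod_cast hij.le
    linarith
  have hs : 0 ≤ 1 - (d * ((j : ℝ) - i) / 2) ^ 2 := by
    have h1 : 0 ≤ d * ((j : ℝ) - i) := mul_nonneg hd.le hji0
    have h2 : d * ((j : ℝ) - i) ≤ d * ((n : ℝ) - 1) := by
      exact mul_le_mul_of_nonneg_left hji hd.le
    nlinarith
  set D := dist (rampPt d i j) (lanePt d k) with hD
  have hD2 : D ^ 2 = (((i : ℝ) + j) * d / 2 - d * k) ^ 2 +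
      (1 - (d * ((j : ℝ) - i) / 2) ^ 2) := by
    have hre : (rampPt d i j - lanePt d k).re = ((i : ℝ) + j) * d / 2 - d * k := by
      simp [rampPt, lanePt]
    have him : (rampPt d i j - lanePt d k).im =
        Real.sqrt (1 - (d * ((j : ℝ) - i) / 2) ^ 2) := by
      simp [rampPt, lanePt]
    rw [hD, Complex.dist_eq, Complex.sq_norm, Complex.normSq_apply, hre, him,
      Real.mul_self_sqrt hs]
    ring
  have hDnn : 0 ≤ D := dist_nonneg
  constructor
  · intro hik hkj
    have h1 : (i : ℝ) < k := by exact_mod_cast hik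
    have h2 : (k : ℝ) < j := by exact_mod_cast hkj
    have hp : 0 < d * d * (((k : ℝ) - i) * ((j : ℝ) - k)) :=
      mul_pos (mul_pos hd hd) (mul_pos (by linarith) (by linarith))
    have hlt : D ^ 2 < 1 := by nlinarith
    nlinarith
  · intro h
    have hp : 0 < d * d * (((k : ℝ) - i) * ((k : ℝ) - j)) := by
      rcases h with h | h
      · have h1 : (k : ℝ) < i := by exact_mod_cast h
        have h2 : (i : ℝ) < j := by exact_mod_cast hij
        exact mul_pos (mul_pos hd hd)
          (mul_pos_of_neg_of_neg (by linarith) (by linarith))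
      · have h1 : (j : ℝ) < k := by exact_mod_cast h
        have h2 : (i : ℝ) < j := by exact_mod_cast hij
        exact mul_pos (mul_pos hd hd) (mul_pos (by linarith) (by linarith))
    have hgt : 1 < D ^ 2 := by nlinarith
    nlinarith
end

section
/- Let n and k be positive integers with k³ ≤ n (roughly k ≈ n^{1/3}). In the dense interchange of order n (lanes 0,...,n-1; ramp r(x,y) for x<y adjacent to lanes x, x+1, ..., y), let S consist of all lanes together with the ramps r(x,y) satisfying y - x ≥ k and x ≡ ky (mod k²+1). Then in the induced subgraph on S, any two distinct ramps in S have open neighborhoods (within S) whose symmetric difference has size at least k+1. -/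
/-- In the dense interchange of order `n` (lanes `0,...,n-1`, ramp `r(x,y)` adjacent
among lanes exactly to `x, x+1, ..., y`), restrict to the ramps `r(x,y)` with
`y - x ≥ k` and `x ≡ ky (mod k²+1)`. Then any two distinct such ramps have lane
neighborhoods whose symmetric difference has size at least `k + 1`. -/
theorem diverse_subgraph_of_interchange (n k : ℕ) (hk : 0 < k) (hn : k ^ 3 ≤ n)
    (x y x' y' : ℕ) (hxy : x < y) (hyn : y < n) (hxy' : x' < y') (hyn' : y' < n)
    (hgap : k ≤ y - x) (hgap' : k ≤ y' - x')
    (hcong : (x : ℤ) ≡ (k : ℤ) * (y : ℤ) [ZMOD ((k : ℤ) ^ 2 + 1)])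
    (hcong' : (x' : ℤ) ≡ (k : ℤ) * (y' : ℤ) [ZMOD ((k : ℤ) ^ 2 + 1)])
    (hne : (x, y) ≠ (x', y')) :
    k + 1 ≤ (symmDiff (Finset.Icc x y) (Finset.Icc x' y')).card := by
  simp only [ne_eq, Prod.mk.injEq, not_and] at hne
  set m : ℤ := (k : ℤ) ^ 2 + 1 with hm
  set a : ℤ := (x : ℤ) - x' with ha
  set b : ℤ := (y : ℤ) - y' with hb
  have hdvd : m ∣ a - (k : ℤ) * b := by
    obtain ⟨c, hc⟩ := (hcong.sub hcong').dvd
    exact ⟨-c, by linear_combination -hc⟩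
  obtain ⟨c, hc⟩ := hdvd
  have hkpos : (0 : ℤ) < (k : ℤ) := by exact_mod_cast hk
  -- key lattice inequality
  have hkey : (k : ℤ) + 1 ≤ |a| + |b| := by
    by_contra h
    push_neg at h
    have hc0 : c = 0 := by
      by_contra hc0
      have h1 : (1 : ℤ) ≤ |c| := Int.one_le_abs hc0
      have h2 : |a - (k : ℤ) * b| ≤ |a| + (k : ℤ) * |b| := by
        calc |a - (k : ℤ) * b| ≤ |a| + |(k : ℤ) * b| := abs_sub _ _
          _ = |a| + (k : ℤ) * |b| := by
              rw [abs_mul, abs_of_nonneg hkpos.le]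
      have h3 : m ≤ |a - (k : ℤ) * b| := by
        rw [hc, abs_mul]
        have : |m| = m := abs_of_pos (by positivity)
        nlinarith
      nlinarith [abs_nonneg a, abs_nonneg b]
    rw [hc0, mul_zero] at hc
    have hab : a = (k : ℤ) * b := by linarith
    have habs : |a| = (k : ℤ) * |b| := by
      rw [hab, abs_mul, abs_of_nonneg hkpos.le]
    have hb0 : b = 0 := by
      rw [habs] at h
      have := abs_nonneg b
      have : |b| = 0 := by nlinarith
      exact abs_eq_zero.mp this
    have ha0 : a = 0 := by rw [hab, hb0, mul_zero]
    have hx : x = x' := by omega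
    have hy : y = y' := by omega
    exact hne hx hy
  -- turn the abs inequality into linear facts
  rcases abs_cases a with ⟨h1, _⟩ | ⟨h1, _⟩ <;>
    rcases abs_cases b with ⟨h2, _⟩ | ⟨h2, _⟩ <;>
      rw [h1, h2] at hkey <;>
  · -- cardinality computations
    have e1 : (Finset.Icc x y).card = y + 1 - x := Nat.card_Icc x y
    have e2 : (Finset.Icc x' y').card = y' + 1 - x' := Nat.card_Icc x' y'
    have e3 : (Finset.Icc x y ∩ Finset.Icc x' y').card = min y y' + 1 - max x x' := by
      have : Finset.Icc x y ∩ Finset.Icc x' y' = Finset.Icc (max x x') (min y y') := by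
        ext t
        simp only [Finset.mem_inter, Finset.mem_Icc]
        omega
      rw [this, Nat.card_Icc]
    have e4 : (symmDiff (Finset.Icc x y) (Finset.Icc x' y')).card
        + 2 * (Finset.Icc x y ∩ Finset.Icc x' y').card
        = (Finset.Icc x y).card + (Finset.Icc x' y').card := by
      rw [symmDiff_def, Finset.sup_eq_union,
        Finset.card_union_of_disjoint disjoint_sdiff_sdiff]
      have u := Finset.card_sdiff_add_card_inter (Finset.Icc x y) (Finset.Icc x' y')
      have v := Finset.card_sdiff_add_card_inter (Finset.Icc x' y') (Finset.Icc x y)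
      rw [Finset.inter_comm] at v
      omega
    omega
end

section
/- Define recursively point sets X_d ⊆ ℤ² with distinguished subsets Y_d: X₁ = Y₁ = {(0,0),(1,1)}; X_d is formed by placing side by side (with disjoint x-ranges, left to right) a copy of X_{d-1} scaled vertically by 3, a copy of Y_{d-1} scaled vertically by 3 and shifted up by 2 (omitting its topmost point), and a copy of X_{d-1} scaled vertically by 3 and shifted up by 1; Y_d is the union of the copies of Y_{d-1} inside the first and third pieces. Then in the rectangle of influence graph of X_d (two points adjacent iff the open axis-aligned bounding rectangle they span contains no other point of X_d), the subset Y_d induces the d-dimensional hypercube graph. -/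
/-- The rectangle of influence graph of a point set `P ⊆ ℤ²`: two distinct points of
`P` are adjacent iff the axis-aligned closed rectangle they span contains no other
point of `P`. -/
def rig (P : Set (ℤ × ℤ)) : SimpleGraph (ℤ × ℤ) where
  Adj p q := p ≠ q ∧ p ∈ P ∧ q ∈ P ∧ ∀ r ∈ P, r ≠ p → r ≠ q →
    ¬ (min p.1 q.1 ≤ r.1 ∧ r.1 ≤ max p.1 q.1 ∧ min p.2 q.2 ≤ r.2 ∧ r.2 ≤ max p.2 q.2)
  symm := by
    constructor
    rintro p q ⟨h1, h2, h3, h4⟩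
    refine ⟨h1.symm, h3, h2, ?_⟩
    intro r hr hrq hrp
    simpa [min_comm, max_comm] using h4 r hr hrp hrq
  loopless := ⟨fun p h => h.1 rfl⟩

/-- The recursive construction: `XYT d = (X_d, Y_d, T_d)` where `X₁ = Y₁ =
{(0,0),(1,1)}`, and `X_{d+1}` is formed by placing side by side (with disjoint
`x`-ranges) a copy of `X_d` scaled vertically by 3, a copy of `Y_d` scaled vertically
by 3 and shifted up by 2 with its topmost point `T_d` omitted, and a copy of `X_d`
scaled vertically by 3 and shifted up by 1; `Y_{d+1}` is the union of the copies of
`Y_d` inside the first and third pieces, and `T_{d+1}` is the topmost point of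
`Y_{d+1}`. -/
def XYT : ℕ → Set (ℤ × ℤ) × Set (ℤ × ℤ) × (ℤ × ℤ)
  | 0 => ({(0, 0)}, {(0, 0)}, (0, 0))
  | 1 => ({(0, 0), (1, 1)}, {(0, 0), (1, 1)}, (1, 1))
  | (d + 2) =>
    let prev := XYT (d + 1)
    let Xp := prev.1
    let Yp := prev.2.1
    let Tp := prev.2.2
    let off : ℤ := 4 ^ (d + 1)
    ((fun p : ℤ × ℤ => (p.1, 3 * p.2)) '' Xp ∪
        (fun p : ℤ × ℤ => (p.1 + off, 3 * p.2 + 2)) '' (Yp \ {Tp}) ∪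
        (fun p : ℤ × ℤ => (p.1 + 2 * off, 3 * p.2 + 1)) '' Xp,
      (fun p : ℤ × ℤ => (p.1, 3 * p.2)) '' Yp ∪
        (fun p : ℤ × ℤ => (p.1 + 2 * off, 3 * p.2 + 1)) '' Yp,
      (Tp.1 + 2 * off, 3 * Tp.2 + 1))

/-- The point set `X_d`. -/
def Xset (d : ℕ) : Set (ℤ × ℤ) := (XYT d).1

/-- The distinguished subset `Y_d ⊆ X_d`. -/
def Yset (d : ℕ) : Set (ℤ × ℤ) := (XYT d).2.1

/-- The `d`-dimensional hypercube graph on `{0,1}^d`: two vertices are adjacent when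
they differ in exactly one coordinate. -/
def hypercube (d : ℕ) : SimpleGraph (Fin d → Bool) where
  Adj a b := hammingDist a b = 1
  symm := by
    constructor
    intro a b h
    rwa [hammingDist_comm]
  loopless := by
    constructor
    intro a h
    simp [hammingDist_self] at h

/-!
The proof is an induction on `d` along the recursion `Q_{d+1} = K₂ □ Q_d`. Besides `Y_d ⊆ X_d`,
it carries the invariant that `X_d` lies in the strip `0 ≤ x < 4^d`, has pairwise distinct
`y`-coordinates, and has `T_d` as its unique highest point. The three pieces of `X_{d+1}` occupy
disjoint vertical strips and the maps `(x, y) ↦ (x + a, 3y + b)` are strictly monotone in each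
coordinate, so on either outer copy of `Y_d` the graph is that of `Y_d` in `X_d`. A point of the
left copy and a point of the right copy coming from the same `p ∈ Y_d` span a rectangle of height
one that meets no other point; if they come from different points, the middle copy of the lower
one (which is not `T_d`) lies in their rectangle.
-/

theorem hammingDist_cons {n : ℕ} {β : Type*} [DecidableEq β] (a b : β) (x y : Fin n → β) :
    hammingDist (Fin.cons a x : Fin (n + 1) → β) (Fin.cons b y) =
      (if a = b then 0 else 1) + hammingDist x y := by
  simp only [hammingDist, Finset.card_filter, Fin.sum_univ_succ, Fin.cons_zero, Fin.cons_succ,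
    ite_not]

theorem hammingDist_cons_eq_one {n : ℕ} {β : Type*} [DecidableEq β] (a b : β) (x y : Fin n → β) :
    hammingDist (Fin.cons a x : Fin (n + 1) → β) (Fin.cons b y) = 1 ↔
      a ≠ b ∧ x = y ∨ hammingDist x y = 1 ∧ a = b := by
  rw [hammingDist_cons, ← hammingDist_eq_zero]
  by_cases h : a = b <;> simp [h]

def boxProdHypercubeIso (n : ℕ) :
    (⊤ : SimpleGraph Bool).boxProd (hypercube n) ≃g hypercube (n + 1) where
  toEquiv := Fin.consEquiv fun _ => Bool
  map_rel_iff' {x y} := by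
    simp only [hypercube, SimpleGraph.boxProd_adj, SimpleGraph.top_adj]
    exact hammingDist_cons_eq_one x.1 y.1 x.2 y.2

def hypercubeOneIso : hypercube 1 ≃g (⊤ : SimpleGraph Bool) where
  toEquiv := Equiv.funUnique (Fin 1) Bool
  map_rel_iff' {a b} := by
    change _ ≠ _ ↔ hammingDist a b = 1
    rw [(Equiv.funUnique (Fin 1) Bool).injective.ne_iff, ← hammingDist_pos]
    have := (hammingDist_le_card_fintype (x := a) (y := b)).trans_eq (Fintype.card_fin 1)
    omega

def SimpleGraph.Iso.boxProdCongrRight {α β γ : Type*} {H : SimpleGraph β} {H' : SimpleGraph γ}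
    (e : H ≃g H') (G : SimpleGraph α) : G.boxProd H ≃g G.boxProd H' where
  toEquiv := (Equiv.refl α).prodCongr e.toEquiv
  map_rel_iff' := by simp [SimpleGraph.boxProd_adj, e.map_adj_iff]

namespace RectangleOfInfluence

open SimpleGraph

theorem rig_adj_image_prodMap {f g : ℤ → ℤ} (hf : StrictMono f) (hg : StrictMono g)
    (Q : Set (ℤ × ℤ)) (p q : ℤ × ℤ) :
    (rig (Prod.map f g '' Q)).Adj (Prod.map f g p) (Prod.map f g q) ↔ (rig Q).Adj p q := by
  have hinj : Function.Injective (Prod.map f g) := hf.injective.prodMap hg.injective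
  simp only [rig, hinj.ne_iff, hinj.mem_set_image, Set.forall_mem_image, Prod.map_fst,
    Prod.map_snd, ← hf.monotone.map_min, ← hf.monotone.map_max, ← hg.monotone.map_min,
    ← hg.monotone.map_max, hf.le_iff_le, hg.le_iff_le]

theorem rig_adj_union_of_separated {A B : Set (ℤ × ℤ)} {I : Set ℤ} (hI : I.OrdConnected)
    (hA : ∀ p ∈ A, p.1 ∈ I) (hB : ∀ r ∈ B, r.1 ∉ I) {p q : ℤ × ℤ} (hp : p ∈ A) (hq : q ∈ A) :
    (rig (A ∪ B)).Adj p q ↔ (rig A).Adj p q := by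
  have hB' : ∀ r ∈ B, ¬ (min p.1 q.1 ≤ r.1 ∧ r.1 ≤ max p.1 q.1) := fun r hr h =>
    hB r hr (hI.uIcc_subset (hA p hp) (hA q hq) h)
  simp only [rig, Set.mem_union, hp, hq, true_or, true_and, or_imp, forall_and]
  constructor
  · exact fun h => ⟨h.1, h.2.1⟩
  · exact fun h => ⟨h.1, h.2, fun r hr _ _ hr' => hB' r hr ⟨hr'.1, hr'.2.1⟩⟩

theorem rig_adj_pair {p q : ℤ × ℤ} : (rig {p, q}).Adj p q ↔ p ≠ q :=
  ⟨fun h => h.1, fun h =>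
    ⟨h, Or.inl rfl, Or.inr rfl, by rintro r (rfl | rfl) hp hq <;> contradiction⟩⟩

def topPoint (d : ℕ) : ℤ × ℤ := (XYT d).2.2

abbrev leftMap : ℤ × ℤ → ℤ × ℤ := fun p => (p.1, 3 * p.2)

abbrev midMap (d : ℕ) : ℤ × ℤ → ℤ × ℤ := fun p => (p.1 + 4 ^ (d + 1), 3 * p.2 + 2)

abbrev rightMap (d : ℕ) : ℤ × ℤ → ℤ × ℤ := fun p => (p.1 + 2 * 4 ^ (d + 1), 3 * p.2 + 1)

theorem Xset_add_two (d : ℕ) : Xset (d + 2) = leftMap '' Xset (d + 1) ∪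
    midMap d '' (Yset (d + 1) \ {topPoint (d + 1)}) ∪ rightMap d '' Xset (d + 1) := rfl

theorem Yset_add_two (d : ℕ) :
    Yset (d + 2) = leftMap '' Yset (d + 1) ∪ rightMap d '' Yset (d + 1) := rfl

theorem topPoint_add_two (d : ℕ) : topPoint (d + 2) = rightMap d (topPoint (d + 1)) := rfl

structure Invariant (d : ℕ) : Prop where
  Yset_subset : Yset d ⊆ Xset d
  fst_nonneg : ∀ p ∈ Xset d, 0 ≤ p.1
  fst_lt : ∀ p ∈ Xset d, p.1 < 4 ^ d
  injOn_snd : Set.InjOn Prod.snd (Xset d)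
  snd_lt_topPoint : ∀ p ∈ Xset d, p ≠ topPoint d → p.2 < (topPoint d).2

theorem Invariant.snd_le_topPoint {d : ℕ} (h : Invariant d) {p : ℤ × ℤ} (hp : p ∈ Xset d) :
    p.2 ≤ (topPoint d).2 := by
  by_cases hpT : p = topPoint d
  · exact hpT ▸ le_rfl
  · exact (h.snd_lt_topPoint p hp hpT).le

theorem invariant_one : Invariant 1 where
  Yset_subset := subset_rfl
  fst_nonneg := by
    rintro p (rfl | rfl | -) <;> simp
  fst_lt := by
    rintro p (rfl | rfl | -) <;> simp
  injOn_snd := by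
    rintro p (rfl | rfl | -) q (rfl | rfl | -) h <;> simp_all
  snd_lt_topPoint := by
    rintro p (rfl | rfl | -) h <;> simp_all [topPoint, XYT]

theorem Invariant.add_two {d : ℕ} (h : Invariant (d + 1)) : Invariant (d + 2) where
  Yset_subset := by
    rw [Yset_add_two, Xset_add_two]
    exact Set.union_subset_union (Set.subset_union_of_subset_left
      (Set.image_mono h.Yset_subset) _) (Set.image_mono h.Yset_subset)
  fst_nonneg := by
    rintro _ ((⟨s, hs, rfl⟩ | ⟨s, ⟨hs, -⟩, rfl⟩) | ⟨s, hs, rfl⟩) <;>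
      [have := h.fst_nonneg s hs; have := h.fst_nonneg s (h.Yset_subset hs);
        have := h.fst_nonneg s hs] <;>
      dsimp only <;> positivity
  fst_lt := by
    have h4 : (4 : ℤ) ^ (d + 2) = 4 * 4 ^ (d + 1) := by ring
    have : (0 : ℤ) < 4 ^ (d + 1) := by positivity
    rintro _ ((⟨s, hs, rfl⟩ | ⟨s, ⟨hs, -⟩, rfl⟩) | ⟨s, hs, rfl⟩) <;>
      [have := h.fst_lt s hs; have := h.fst_lt s (h.Yset_subset hs); have := h.fst_lt s hs] <;>
      dsimp only <;> omega
  injOn_snd := by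
    have hY := h.Yset_subset
    rintro _ ((⟨s, hs, rfl⟩ | ⟨s, ⟨hs, -⟩, rfl⟩) | ⟨s, hs, rfl⟩)
      _ ((⟨t, ht, rfl⟩ | ⟨t, ⟨ht, -⟩, rfl⟩) | ⟨t, ht, rfl⟩) hst <;> dsimp only at hst <;>
      first
        | omega
        | rw [h.injOn_snd hs ht (by omega)]
        | rw [h.injOn_snd (hY hs) (hY ht) (by omega)]
  snd_lt_topPoint := by
    rw [topPoint_add_two]
    rintro _ ((⟨s, hs, rfl⟩ | ⟨s, ⟨hs, hsT⟩, rfl⟩) | ⟨s, hs, rfl⟩) hne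
    · have := h.snd_le_topPoint hs
      dsimp only; omega
    · have := h.snd_lt_topPoint s (h.Yset_subset hs) hsT
      dsimp only; omega
    · have := h.snd_lt_topPoint s hs (fun hsT => hne (hsT ▸ rfl))
      dsimp only; omega

theorem invariant_succ (d : ℕ) : Invariant (d + 1) := by
  induction d with
  | zero => exact invariant_one
  | succ d ih => exact ih.add_two

section Step

variable {d : ℕ}

theorem leftMap_mem {p : ℤ × ℤ} (hp : p ∈ Xset (d + 1)) : leftMap p ∈ Xset (d + 2) :=
  Or.inl (Or.inl ⟨p, hp, rfl⟩)

theorem midMap_mem {p : ℤ × ℤ} (hp : p ∈ Yset (d + 1)) (hpT : p ≠ topPoint (d + 1)) :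
    midMap d p ∈ Xset (d + 2) :=
  Or.inl (Or.inr ⟨p, ⟨hp, hpT⟩, rfl⟩)

theorem rightMap_mem {p : ℤ × ℤ} (hp : p ∈ Xset (d + 1)) : rightMap d p ∈ Xset (d + 2) :=
  Or.inr ⟨p, hp, rfl⟩

theorem adj_leftMap_leftMap (h : Invariant (d + 1)) {p q : ℤ × ℤ} (hp : p ∈ Xset (d + 1))
    (hq : q ∈ Xset (d + 1)) :
    (rig (Xset (d + 2))).Adj (leftMap p) (leftMap q) ↔ (rig (Xset (d + 1))).Adj p q := by
  rw [Xset_add_two, Set.union_assoc, rig_adj_union_of_separated (I := Set.Iio (4 ^ (d + 1)))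
    Set.ordConnected_Iio ?_ ?_ (Set.mem_image_of_mem _ hp) (Set.mem_image_of_mem _ hq)]
  · exact rig_adj_image_prodMap (f := id) (g := (3 * ·)) strictMono_id
      (strictMono_mul_left_of_pos three_pos) _ _ _
  · rintro _ ⟨s, hs, rfl⟩
    exact h.fst_lt s hs
  · have : (0 : ℤ) < 4 ^ (d + 1) := by positivity
    rintro _ (⟨s, ⟨hs, -⟩, rfl⟩ | ⟨s, hs, rfl⟩) <;>
      [have := h.fst_nonneg s (h.Yset_subset hs); have := h.fst_nonneg s hs] <;>
      simp only [Set.mem_Iio, not_lt] <;> omega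

theorem adj_rightMap_rightMap (h : Invariant (d + 1)) {p q : ℤ × ℤ} (hp : p ∈ Xset (d + 1))
    (hq : q ∈ Xset (d + 1)) :
    (rig (Xset (d + 2))).Adj (rightMap d p) (rightMap d q) ↔ (rig (Xset (d + 1))).Adj p q := by
  rw [Xset_add_two, Set.union_comm, rig_adj_union_of_separated (I := Set.Ici (2 * 4 ^ (d + 1)))
    Set.ordConnected_Ici ?_ ?_ (Set.mem_image_of_mem _ hp) (Set.mem_image_of_mem _ hq)]
  · exact rig_adj_image_prodMap (f := (· + 2 * 4 ^ (d + 1))) (g := (3 * · + 1))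
      (strictMono_id.add_const _) ((strictMono_mul_left_of_pos three_pos).add_const 1) _ _ _
  · rintro _ ⟨s, hs, rfl⟩
    have := h.fst_nonneg s hs
    simp only [Set.mem_Ici]; omega
  · have : (0 : ℤ) < 4 ^ (d + 1) := by positivity
    rintro _ (⟨s, hs, rfl⟩ | ⟨s, ⟨hs, -⟩, rfl⟩) <;>
      [have := h.fst_lt s hs; have := h.fst_lt s (h.Yset_subset hs)] <;>
      simp only [Set.mem_Ici, not_le] <;> omega

theorem adj_leftMap_rightMap (h : Invariant (d + 1)) {s t : ℤ × ℤ} (hs : s ∈ Yset (d + 1))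
    (ht : t ∈ Yset (d + 1)) :
    (rig (Xset (d + 2))).Adj (leftMap s) (rightMap d t) ↔ s = t := by
  have hsX := h.Yset_subset hs
  have htX := h.Yset_subset ht
  have := h.fst_nonneg s hsX
  have := h.fst_lt s hsX
  have := h.fst_nonneg t htX
  have := h.fst_lt t htX
  constructor
  · rintro ⟨-, -, -, hblk⟩
    by_contra hst
    have hy : s.2 ≠ t.2 := fun hy => hst (h.injOn_snd hsX htX hy)
    obtain ⟨u, hu, huT, huy⟩ : ∃ u ∈ Yset (d + 1), u ≠ topPoint (d + 1) ∧ u.2 = min s.2 t.2 := by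
      rcases hy.lt_or_gt with hlt | hlt
      · refine ⟨s, hs, fun hsT => ?_, (min_eq_left hlt.le).symm⟩
        exact (hsT ▸ hlt).not_ge (h.snd_le_topPoint htX)
      · refine ⟨t, ht, fun htT => ?_, (min_eq_right hlt.le).symm⟩
        exact (htT ▸ hlt).not_ge (h.snd_le_topPoint hsX)
    have := h.fst_nonneg u (h.Yset_subset hu)
    have := h.fst_lt u (h.Yset_subset hu)
    refine hblk _ (midMap_mem hu huT) ?_ ?_ ?_
    · rw [Ne, Prod.ext_iff]; dsimp only; omega
    · rw [Ne, Prod.ext_iff]; dsimp only; omega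
    · dsimp only; omega
  · rintro rfl
    refine ⟨?_, leftMap_mem hsX, rightMap_mem hsX, ?_⟩
    · rw [Ne, Prod.ext_iff]; dsimp only; omega
    rintro _ ((⟨u, hu, rfl⟩ | ⟨u, ⟨-, -⟩, rfl⟩) | ⟨u, hu, rfl⟩) hul hur hrect
    · dsimp only at hrect
      exact hul (by rw [h.injOn_snd hu hsX (by omega)])
    · dsimp only at hrect; omega
    · dsimp only at hrect
      exact hur (by rw [h.injOn_snd hu hsX (by omega)])

def copyMap (d : ℕ) : Bool → ℤ × ℤ → ℤ × ℤ
  | false => leftMap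
  | true => rightMap d

theorem copyMap_mem_Yset (b : Bool) {s : ℤ × ℤ} (hs : s ∈ Yset (d + 1)) :
    copyMap d b s ∈ Yset (d + 2) := by
  rw [Yset_add_two]
  cases b
  · exact Or.inl (Set.mem_image_of_mem _ hs)
  · exact Or.inr (Set.mem_image_of_mem _ hs)

theorem copyMap_inj (h : Invariant (d + 1)) {b c : Bool} {s t : ℤ × ℤ} (hs : s ∈ Xset (d + 1))
    (ht : t ∈ Xset (d + 1)) : copyMap d b s = copyMap d c t ↔ b = c ∧ s = t := by
  have := h.fst_nonneg s hs
  have := h.fst_lt s hs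
  have := h.fst_nonneg t ht
  have := h.fst_lt t ht
  refine ⟨fun hst => ?_, fun ⟨hbc, hst⟩ => hbc ▸ hst ▸ rfl⟩
  rw [Prod.ext_iff] at hst ⊢
  cases b <;> cases c <;> dsimp only [copyMap] at hst ⊢ <;>
    first
      | exact ⟨rfl, by omega, by omega⟩
      | exact absurd hst.1 (by omega)

theorem adj_copyMap (h : Invariant (d + 1)) {b c : Bool} {s t : ℤ × ℤ} (hs : s ∈ Yset (d + 1))
    (ht : t ∈ Yset (d + 1)) : (rig (Xset (d + 2))).Adj (copyMap d b s) (copyMap d c t) ↔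
      b ≠ c ∧ s = t ∨ (rig (Xset (d + 1))).Adj s t ∧ b = c := by
  have hsX := h.Yset_subset hs
  have htX := h.Yset_subset ht
  cases b <;> cases c
  · simpa [copyMap] using adj_leftMap_leftMap h hsX htX
  · simpa [copyMap] using adj_leftMap_rightMap h hs ht
  · simpa [copyMap, SimpleGraph.adj_comm, eq_comm] using adj_leftMap_rightMap h ht hs
  · simpa [copyMap] using adj_rightMap_rightMap h hsX htX

noncomputable def Invariant.boxProdIso (h : Invariant (d + 1)) :
    (⊤ : SimpleGraph Bool).boxProd ((rig (Xset (d + 1))).induce (Yset (d + 1))) ≃g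
      (rig (Xset (d + 2))).induce (Yset (d + 2)) where
  toEquiv := Equiv.ofBijective (fun x => ⟨copyMap d x.1 x.2, copyMap_mem_Yset x.1 x.2.2⟩) <| by
    refine ⟨fun x y hxy => ?_, ?_⟩
    · obtain ⟨hb, hs⟩ := (copyMap_inj h (h.Yset_subset x.2.2) (h.Yset_subset y.2.2)).1
        (congrArg Subtype.val hxy)
      exact Prod.ext hb (Subtype.ext hs)
    · rintro ⟨_, ⟨s, hs, rfl⟩ | ⟨s, hs, rfl⟩⟩
      · exact ⟨(false, ⟨s, hs⟩), rfl⟩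
      · exact ⟨(true, ⟨s, hs⟩), rfl⟩
  map_rel_iff' {x y} := by
    change (rig _).Adj (copyMap d x.1 x.2) (copyMap d y.1 y.2) ↔ _
    rw [adj_copyMap h x.2.2 y.2.2, boxProd_adj, top_adj, induce_adj, Subtype.ext_iff]

end Step

noncomputable def topIsoInduceOne : (⊤ : SimpleGraph Bool) ≃g (rig (Xset 1)).induce (Yset 1) where
  toEquiv := Equiv.ofBijective
    (fun b => ⟨cond b (1, 1) (0, 0), by cases b <;> simp [Yset, XYT]⟩) <| by
    refine ⟨fun b c hbc => ?_, ?_⟩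
    · cases b <;> cases c <;> simp_all
    · rintro ⟨_, rfl | rfl⟩
      · exact ⟨false, rfl⟩
      · exact ⟨true, rfl⟩
  map_rel_iff' {b c} := by
    change (rig {(0, 0), (1, 1)}).Adj (cond b (1, 1) (0, 0)) (cond c (1, 1) (0, 0)) ↔ b ≠ c
    cases b <;> cases c <;> simp [rig_adj_pair, (rig _).adj_comm (1, 1)]

noncomputable def hypercubeIsoInduce :
    (n : ℕ) → hypercube (n + 1) ≃g (rig (Xset (n + 1))).induce (Yset (n + 1))
  | 0 => hypercubeOneIso.trans topIsoInduceOne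
  | n + 1 => (boxProdHypercubeIso (n + 1)).symm.trans <|
      ((hypercubeIsoInduce n).boxProdCongrRight ⊤).trans (invariant_succ n).boxProdIso

end RectangleOfInfluence

/-- In the rectangle of influence graph of `X_d`, the subset `Y_d` induces the
`d`-dimensional hypercube graph. -/
theorem rectangle_of_influence_hypercube (d : ℕ) (hd : 1 ≤ d) :
    Nonempty (hypercube d ≃g (rig (Xset d)).induce (Yset d)) := by
  obtain ⟨n, rfl⟩ := Nat.exists_eq_add_of_le' hd
  exact ⟨RectangleOfInfluence.hypercubeIsoInduce n⟩
end
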